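/- (Theorem 2, Horn–Jackson) Let (G_k,y) be a mass-action system and x* ∈ ℝ^n_{>0} a positive complex-balanced equilibrium. Then for every x ∈ ℝ^n_{>0} that is not a complex-balanced equilibrium (i.e. A_k x^Y ≠ 0), the strict inequality (ln(x/x*)) · f_k(x) < 0 holds, where ln(x/x*) ∈ ℝ^n denotes the vector with entries ln(x_j/x*_j) and · the Euclidean scalar product. -/

import Mathlib

open Matrix BigOperators Finset

variable {V : Type*}

/-- Directed reachability in the digraph with edge set `F`. -/
def dReach (F : Finset (V × V)) : V → V → Prop :=
  Relation.ReflTransGen fun a b => (a, b) ∈ F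

/-- Reachability in the underlying undirected graph of the digraph with edge set `F`. -/
def uReach (F : Finset (V × V)) : V → V → Prop :=
  Relation.ReflTransGen fun a b => (a, b) ∈ F ∨ (b, a) ∈ F

/-- A digraph is strongly connected if every vertex reaches every other vertex. -/
def StronglyConnected (F : Finset (V × V)) : Prop :=
  ∀ i j : V, dReach F i j

/-- A simple digraph has no self-loops. -/
def NoSelfLoops (F : Finset (V × V)) : Prop :=
  ∀ e ∈ F, e.1 ≠ e.2

/-- The edge set `F` contains a directed cycle. -/
def HasDirectedCycle (F : Finset (V × V)) : Prop :=
  ∃ v : V, Relation.TransGen (fun a b => (a, b) ∈ F) v v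

/-- The Laplacian matrix `A_k` of the labeled digraph `(V, F, k)`:
`(A_k)_{i,j} = k_{j→i}` if `(j→i) ∈ F`, `(A_k)_{i,i} = -∑_{(i→j)∈F} k_{i→j}`, and `0` otherwise. -/
noncomputable def laplacianMatrix [Fintype V] [DecidableEq V]
    (F : Finset (V × V)) (k : V × V → ℝ) : Matrix V V ℝ :=
  Matrix.of fun i j =>
    if i = j then -(∑ e ∈ F.filter (fun e => e.1 = i), k e)
    else if (j, i) ∈ F then k (j, i) else 0

/-- `T` is a directed spanning tree of the strongly connected digraph `E`, rooted at `i`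
and directed towards the root: no directed cycle, and every vertex except `i`
is the source of exactly one edge. -/
def IsSpanningTreeTo [DecidableEq V] (E : Finset (V × V)) (i : V)
    (T : Finset (V × V)) : Prop :=
  T ⊆ E ∧ ¬ HasDirectedCycle T ∧
    ∀ j : V, j ≠ i → (T.filter (fun e => e.1 = j)).card = 1

open scoped Classical in
/-- The tree constant `(K_k)_i = ∑_{T ∈ T_i} ∏_{(j→j')∈T} k_{j→j'}`. -/
noncomputable def treeConst [Fintype V] [DecidableEq V]
    (E : Finset (V × V)) (k : V × V → ℝ) (i : V) : ℝ :=
  ∑ T ∈ E.powerset.filter (fun T => IsSpanningTreeTo E i T), ∏ e ∈ T, k e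

/-- The incidence matrix of the digraph with edge set `F`: in the column of edge `(j→j')`,
entry `-1` in row `j`, entry `+1` in row `j'`, and `0` elsewhere. -/
noncomputable def incidence [DecidableEq V] (F : Finset (V × V)) :
    Matrix V {e : V × V // e ∈ F} ℝ :=
  Matrix.of fun i e =>
    (if (e : V × V).2 = i then (1 : ℝ) else 0) - (if (e : V × V).1 = i then (1 : ℝ) else 0)

/-- Every connected component of the digraph is strongly connected: whenever `j` is reachable
from `i` in the underlying undirected graph, it is reachable by a directed path. -/
def WeaklyReversible {V : Type*} (F : Finset (V × V)) : Prop :=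
  ∀ i j : V, uReach F i j → dReach F i j

/-- The underlying undirected simple graph of the digraph with edge set `F`. -/
def toSimpleGraph {V : Type*} (F : Finset (V × V)) : SimpleGraph V :=
  SimpleGraph.fromRel fun a b => (a, b) ∈ F

/-- `F` is an auxiliary digraph for the digraph `E`: its connected components are directed
trees on the vertex sets of the connected components of `E`. That is, `F` has no self-loops
and no pair of opposite edges, its underlying undirected graph is acyclic (a forest), and
its connected components coincide with those of `E`. -/
def IsAuxiliary {V : Type*} (E F : Finset (V × V)) : Prop :=
  NoSelfLoops F ∧ (∀ a b : V, (a, b) ∈ F → (b, a) ∉ F) ∧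
    (toSimpleGraph F).IsAcyclic ∧ (∀ i j : V, uReach F i j ↔ uReach E i j)

/-- `F` is a chain graph for `E`: an auxiliary digraph each of whose components is a chain
`i_1 → i_2 → … → i_m` on the corresponding component of `E`; equivalently, an auxiliary
digraph in which every vertex has out-degree at most one and in-degree at most one. -/
def IsChainGraphOn {V : Type*} [DecidableEq V] (E F : Finset (V × V)) : Prop :=
  IsAuxiliary E F ∧ (∀ v : V, (F.filter (fun e => e.1 = v)).card ≤ 1) ∧
    (∀ v : V, (F.filter (fun e => e.2 = v)).card ≤ 1)

/-- `F` is a star graph for `E`: an auxiliary digraph each of whose components is a star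
`i_1 → i_m, …, i_{m-1} → i_m` on the corresponding component of `E`; equivalently, an
auxiliary digraph in which all edges of one component share the same target (the root). -/
def IsStarGraphOn {V : Type*} (E F : Finset (V × V)) : Prop :=
  IsAuxiliary E F ∧ ∀ e ∈ F, ∀ e' ∈ F, uReach F e.2 e'.2 → e.2 = e'.2

/-- `T` is a directed spanning tree, rooted at `i` and directed towards the root, of the
connected component of `i` in the digraph `E`: no directed cycle, every vertex of the
component except `i` is the source of exactly one edge, and vertices outside the component
are sources of no edge. -/
def IsCompSpanningTreeTo {V : Type*} [DecidableEq V] (E : Finset (V × V)) (i : V)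
    (T : Finset (V × V)) : Prop :=
  T ⊆ E ∧ ¬ HasDirectedCycle T ∧
    (∀ j : V, j ≠ i → uReach E j i → (T.filter (fun e => e.1 = j)).card = 1) ∧
    (∀ j : V, ¬ uReach E j i → (T.filter (fun e => e.1 = j)).card = 0)

open scoped Classical in
/-- The tree constants, given componentwise: on each component `V^λ`,
`(K_k)_i = ∑_{T ∈ T_i} ∏_{(j→j')∈T} k_{j→j'}` with `T_i` the set of directed spanning trees
of the component rooted at `i`, directed towards the root. -/
noncomputable def treeConstM {V : Type*} [Fintype V] [DecidableEq V]
    (E : Finset (V × V)) (k : V × V → ℝ) (i : V) : ℝ :=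
  ∑ T ∈ E.powerset.filter (fun T => IsCompSpanningTreeTo E i T), ∏ e ∈ T, k e

/-- The (generalized) monomial `x^{y(i)} = ∏_j x_j^{(y(i))_j}` (real exponentiation). -/
noncomputable def monomial {V : Type*} [Fintype V] {n : ℕ}
    (y : V → Fin n → ℝ) (x : Fin n → ℝ) (i : V) : ℝ :=
  ∏ j : Fin n, x j ^ y i j

/-- The matrix `Y ∈ ℝ^{n × V}` whose columns are the complexes `y(i)`. -/
noncomputable def complexMatrix {V : Type*} {n : ℕ} (y : V → Fin n → ℝ) :
    Matrix (Fin n) V ℝ :=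
  Matrix.of fun j i => y i j

/-- The mass-action vector field `f_k(x) = Y A_k x^Y`. -/
noncomputable def massActionField {V : Type*} [Fintype V] [DecidableEq V] {n : ℕ}
    (E : Finset (V × V)) (k : V × V → ℝ) (y : V → Fin n → ℝ) (x : Fin n → ℝ) :
    Fin n → ℝ :=
  (complexMatrix y).mulVec ((laplacianMatrix E k).mulVec (monomial y x))

/-!
Write `c = x*^Y` and `u = x^Y / c`. Pairing a vector `g` with `A_k w` telescopes along edges,
`∑ᵢ gᵢ (A_k w)ᵢ = ∑_{e = (i→j)} k_e wᵢ (gⱼ - gᵢ)`, and `Yᵀ ln(x/x*) = ln u`, so the quantity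
to bound is `∑ₑ k_e cᵢ uᵢ ln(uⱼ/uᵢ)`. Termwise `uᵢ ln(uⱼ/uᵢ) ≤ uⱼ - uᵢ`, strictly unless
`uᵢ = uⱼ`, and `∑ₑ k_e cᵢ (uⱼ - uᵢ) = ⟨u, A_k c⟩ = 0`. If `u` were constant along every edge,
then `A_k x^Y = u · A_k c = 0`.
-/

theorem Real.mul_log_div_le_sub {a b : ℝ} (ha : 0 < a) (hb : 0 < b) :
    a * Real.log (b / a) ≤ b - a := by
  have h := mul_le_mul_of_nonneg_left (Real.log_le_sub_one_of_pos (div_pos hb ha)) ha.le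
  rwa [mul_sub, mul_div_cancel₀ _ ha.ne', mul_one] at h

theorem Real.mul_log_div_lt_sub {a b : ℝ} (ha : 0 < a) (hb : 0 < b) (hab : a ≠ b) :
    a * Real.log (b / a) < b - a := by
  have hne : b / a ≠ 1 := fun h => hab ((div_eq_one_iff_eq ha.ne').mp h).symm
  have h := mul_lt_mul_of_pos_left (Real.log_lt_sub_one_of_pos (div_pos hb ha) hne) ha
  rwa [mul_sub, mul_div_cancel₀ _ ha.ne', mul_one] at h

theorem sum_mul_log_div_lt_sum_sub {α : Type*} {s : Finset (α × α)} {w : α × α → ℝ}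
    {u : α → ℝ} (hw : ∀ e ∈ s, 0 < w e) (hu : ∀ i, 0 < u i) (hne : ∃ e ∈ s, u e.1 ≠ u e.2) :
    ∑ e ∈ s, w e * (u e.1 * Real.log (u e.2 / u e.1)) < ∑ e ∈ s, w e * (u e.2 - u e.1) := by
  obtain ⟨e₀, he₀, hne₀⟩ := hne
  exact Finset.sum_lt_sum
    (fun e he => mul_le_mul_of_nonneg_left (Real.mul_log_div_le_sub (hu _) (hu _)) (hw e he).le)
    ⟨e₀, he₀, mul_lt_mul_of_pos_left (Real.mul_log_div_lt_sub (hu _) (hu _) hne₀) (hw e₀ he₀)⟩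

section Laplacian

variable [Fintype V] [DecidableEq V] (E : Finset (V × V)) (k : V × V → ℝ)

theorem sum_filter_snd_eq_sum_ite_mem (i : V) (F : V × V → ℝ) :
    ∑ e ∈ E with e.2 = i, F e = ∑ j, if (j, i) ∈ E then F (j, i) else 0 := by
  rw [← Finset.sum_filter]
  refine Eq.trans ?_ (Finset.sum_map _ ⟨(·, i), fun a b h => by simpa using h⟩ F)
  congr 1
  ext ⟨a, b⟩
  simp only [Finset.mem_filter, Finset.mem_map, Finset.mem_univ, true_and]
  constructor
  · rintro ⟨h, rfl⟩; exact ⟨a, h, rfl⟩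
  · rintro ⟨c, h, hc⟩; cases hc; exact ⟨h, rfl⟩

theorem laplacianMatrix_mulVec_apply (hloop : NoSelfLoops E) (w : V → ℝ) (i : V) :
    (laplacianMatrix E k *ᵥ w) i
      = ∑ e ∈ E with e.2 = i, k e * w e.1 - (∑ e ∈ E with e.1 = i, k e) * w i := by
  have hii : (i, i) ∉ E := fun h => hloop _ h rfl
  have hentry : ∀ j, laplacianMatrix E k i j * w j
      = (if (j, i) ∈ E then k (j, i) * w j else 0)
        - if j = i then (∑ e ∈ E with e.1 = i, k e) * w i else 0 := by
    intro j
    by_cases hij : j = i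
    · subst hij; simp [laplacianMatrix, hii]
    · simp [laplacianMatrix, Ne.symm hij, hij, ite_mul]
  simp only [mulVec, dotProduct, hentry, Finset.sum_sub_distrib, Finset.sum_ite_eq',
    Finset.mem_univ, if_true, sum_filter_snd_eq_sum_ite_mem E i]

theorem sum_mul_laplacianMatrix_mulVec (hloop : NoSelfLoops E) (w g : V → ℝ) :
    ∑ i, g i * (laplacianMatrix E k *ᵥ w) i = ∑ e ∈ E, k e * w e.1 * (g e.2 - g e.1) := by
  have hin : ∑ i, ∑ e ∈ E with e.2 = i, g i * (k e * w e.1) = ∑ e ∈ E, k e * w e.1 * g e.2 := by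
    rw [← Finset.sum_fiberwise E Prod.snd]
    exact Finset.sum_congr rfl fun i _ => Finset.sum_congr rfl fun e he => by
      rw [(Finset.mem_filter.mp he).2]; ring
  have hout : ∑ i, ∑ e ∈ E with e.1 = i, g i * (k e * w i) = ∑ e ∈ E, k e * w e.1 * g e.1 := by
    rw [← Finset.sum_fiberwise E Prod.fst]
    exact Finset.sum_congr rfl fun i _ => Finset.sum_congr rfl fun e he => by
      rw [(Finset.mem_filter.mp he).2]; ring
  simp only [laplacianMatrix_mulVec_apply E k hloop, mul_sub, Finset.sum_mul, Finset.mul_sum,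
    Finset.sum_sub_distrib, hin, hout]

theorem laplacianMatrix_mulVec_mul_of_forall_edge {u : V → ℝ} (hu : ∀ e ∈ E, u e.1 = u e.2)
    (w : V → ℝ) : laplacianMatrix E k *ᵥ (u * w) = u * (laplacianMatrix E k *ᵥ w) := by
  ext i
  simp only [mulVec, dotProduct, Pi.mul_apply, Finset.mul_sum]
  refine Finset.sum_congr rfl fun j _ => ?_
  by_cases hij : i = j
  · subst hij; ring
  by_cases hji : (j, i) ∈ E
  · rw [hu _ hji]; ring
  · simp [laplacianMatrix, hij, hji]

end Laplacian

section Monomial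

variable [Fintype V] {n : ℕ} (y : V → Fin n → ℝ)

theorem monomial_pos {x : Fin n → ℝ} (hx : ∀ j, 0 < x j) (i : V) : 0 < monomial y x i :=
  Finset.prod_pos fun j _ => Real.rpow_pos_of_pos (hx j) _

theorem log_monomial_div_monomial {x xs : Fin n → ℝ} (hx : ∀ j, 0 < x j) (hxs : ∀ j, 0 < xs j)
    (i : V) : Real.log (monomial y x i / monomial y xs i) = ∑ j, y i j * Real.log (x j / xs j) := by
  rw [monomial, monomial, ← Finset.prod_div_distrib, Real.log_prod]
  · refine Finset.sum_congr rfl fun j _ => ?_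
    rw [← Real.div_rpow (hx j).le (hxs j).le, Real.log_rpow (div_pos (hx j) (hxs j))]
  · exact fun j _ => (div_pos (Real.rpow_pos_of_pos (hx j) _) (Real.rpow_pos_of_pos (hxs j) _)).ne'

theorem sum_log_div_mul_complexMatrix_mulVec {x xs : Fin n → ℝ} (hx : ∀ j, 0 < x j)
    (hxs : ∀ j, 0 < xs j) (w : V → ℝ) :
    ∑ j, Real.log (x j / xs j) * (complexMatrix y *ᵥ w) j
      = ∑ i, Real.log (monomial y x i / monomial y xs i) * w i := by
  simp only [log_monomial_div_monomial y hx hxs, mulVec, dotProduct, complexMatrix, of_apply,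
    Finset.mul_sum, Finset.sum_mul]
  rw [Finset.sum_comm]
  exact Finset.sum_congr rfl fun _ _ => Finset.sum_congr rfl fun _ _ => by ring

end Monomial

theorem horn_jackson_strict_lyapunov_general
    {V : Type*} [Fintype V] [DecidableEq V] {n : ℕ}
    (E : Finset (V × V)) (hloop : NoSelfLoops E)
    (k : V × V → ℝ) (hk : ∀ e ∈ E, 0 < k e)
    (y : V → Fin n → ℝ)
    (xs : Fin n → ℝ) (hxs : ∀ j, 0 < xs j)
    (hcb : (laplacianMatrix E k).mulVec (monomial y xs) = 0)
    (x : Fin n → ℝ) (hx : ∀ j, 0 < x j)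
    (hncb : (laplacianMatrix E k).mulVec (monomial y x) ≠ 0) :
    ∑ j : Fin n, Real.log (x j / xs j) * massActionField E k y x j < 0 := by
  set c := monomial y xs
  set u : V → ℝ := monomial y x / c
  have hc : ∀ i, 0 < c i := monomial_pos y hxs
  have hu : ∀ i, 0 < u i := fun i => div_pos (monomial_pos y hx i) (hc i)
  have hcu : monomial y x = u * c := funext fun i => (div_mul_cancel₀ _ (hc i).ne').symm
  have hedge : ∃ e ∈ E, u e.1 ≠ u e.2 := by
    by_contra! h
    exact hncb (by rw [hcu, laplacianMatrix_mulVec_mul_of_forall_edge E k h, hcb, mul_zero])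
  calc ∑ j, Real.log (x j / xs j) * massActionField E k y x j
      = ∑ e ∈ E, k e * c e.1 * (u e.1 * Real.log (u e.2 / u e.1)) := by
        rw [massActionField, sum_log_div_mul_complexMatrix_mulVec y hx hxs,
          sum_mul_laplacianMatrix_mulVec E k hloop]
        refine Finset.sum_congr rfl fun e _ => ?_
        change _ * _ * (Real.log (u e.2) - Real.log (u e.1)) = _
        rw [hcu, Real.log_div (hu _).ne' (hu _).ne', Pi.mul_apply]
        ring
    _ < ∑ e ∈ E, k e * c e.1 * (u e.2 - u e.1) :=
        sum_mul_log_div_lt_sum_sub (fun e he => mul_pos (hk e he) (hc _)) hu hedge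
    _ = ∑ i, u i * (laplacianMatrix E k *ᵥ c) i :=
        (sum_mul_laplacianMatrix_mulVec E k hloop c u).symm
    _ = 0 := by simp [hcb]

/-- (Theorem 2, Horn–Jackson) Let `(G_k, y)` be a mass-action system and `x*` a positive
complex-balanced equilibrium. Then for every positive `x` that is not a complex-balanced
equilibrium, `(ln(x/x*)) ⬝ f_k(x) < 0`. -/
theorem horn_jackson_strict_lyapunov
    {V : Type*} [Fintype V] [DecidableEq V] {n : ℕ}
    (E : Finset (V × V)) (hloop : NoSelfLoops E)
    (k : V × V → ℝ) (hk : ∀ e ∈ E, 0 < k e)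
    (y : V → Fin n → ℝ) (hyinj : Function.Injective y) (hynn : ∀ i j, 0 ≤ y i j)
    (xs : Fin n → ℝ) (hxs : ∀ j, 0 < xs j)
    (hcb : (laplacianMatrix E k).mulVec (monomial y xs) = 0)
    (x : Fin n → ℝ) (hx : ∀ j, 0 < x j)
    (hncb : (laplacianMatrix E k).mulVec (monomial y x) ≠ 0) :
    ∑ j : Fin n, Real.log (x j / xs j) * massActionField E k y x j < 0 :=
  horn_jackson_strict_lyapunov_general E hloop k hk y xs hxs hcb x hx hncb
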